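/- Consider the acyclic join J = ABCDE ⋈ ABCE ⋈ ADE ⋈ AB ⋈ AE (relations named by their attribute sets). The subjoin AB ⋈ AE is not safe: there is a fully reduced database D over the schemas of J such that AB ⋈ AE computed on D contains a tuple agreeing on {A,B,E} with no tuple of the join of the remaining relations. Concretely, with values in {0,1}, take t1 assigning 1 to B and E and 0 to A,C,D, and t2 assigning 0 everywhere, populate every relation with the projections of t1 and t2; then D is fully reduced, AB ⋈ AE contains the four tuples over {A,B,E} with A=0, but the join ABCDE ⋈ ABCE ⋈ ADE contains only the two projections of t1 and t2, so the mixed tuples (A=0,B=1,E=0) and (A=0,B=0,E=1) are dangling. -/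

import Mathlib

/-- A tuple `t` agrees with tuple `u` on the attribute set `S`. -/
def Agrees {α V : Type} (S : Set α) (t u : α → V) : Prop := ∀ a ∈ S, t a = u a

/-- The output of the natural join of the relations `R i` with schemas `sch i`. -/
def JoinOut {ι α V : Type} (sch : ι → Set α) (R : ι → Set (α → V)) : Set (α → V) :=
  { t | ∀ i, ∃ u ∈ R i, Agrees (sch i) t u }

/-- The output of the join of the subfamily of relations indexed by `K`. -/
def SubJoinOut {ι α V : Type} (sch : ι → Set α) (R : ι → Set (α → V)) (K : Set ι) :
    Set (α → V) :=
  { t | ∀ i ∈ K, ∃ u ∈ R i, Agrees (sch i) t u }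

/-- A database is fully reduced if every tuple of every relation is the projection of
some tuple in the full join output. -/
def FullyReduced {ι α V : Type} (sch : ι → Set α) (R : ι → Set (α → V)) : Prop :=
  ∀ i, ∀ u ∈ R i, ∃ t ∈ JoinOut sch R, Agrees (sch i) t u

/-- The boundary attributes of the subjoin indexed by `K`: attributes occurring both in
some relation of the subjoin and in some relation outside it. -/
def Boundary {ι α : Type} (sch : ι → Set α) (K : Set ι) : Set α :=
  (⋃ i ∈ K, sch i) ∩ (⋃ i ∈ Kᶜ, sch i)

/-- `G` is a join tree (parse tree) of the join with relation schemas `sch`. -/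
def IsJoinTree {ι α : Type} (G : SimpleGraph ι) (sch : ι → Set α) : Prop :=
  G.IsTree ∧ ∀ a : α, ∀ i j : ι, a ∈ sch i → a ∈ sch j →
    ∃ p : G.Walk i j, ∀ k ∈ p.support, a ∈ sch k

/-- The node set `K` induces a connected subtree of `G`. -/
def ConnectedIn {ι : Type} (G : SimpleGraph ι) (K : Set ι) : Prop :=
  ∀ i ∈ K, ∀ j ∈ K, ∃ p : G.Walk i j, ∀ k ∈ p.support, k ∈ K

/-!
The database is the set of projections of `t1` and `t2`, so each generating tuple is in the full
join and the database is fully reduced. The complement join contains the relation `ABCDE`, whose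
schema is every attribute, so it returns exactly `t1` and `t2`. The relations `AB` and `AE` choose
`B` and `E` independently, so `AB ⋈ AE` also contains the two mixed tuples, and on `{A, B, E}`
these match neither `t1` nor `t2`.
-/

section Agrees

variable {α V : Type} {S : Set α} {t u w : α → V}

theorem Agrees.refl (S : Set α) (t : α → V) : Agrees S t t := fun _ _ => rfl

theorem Agrees.symm (h : Agrees S t u) : Agrees S u t := fun a ha => (h a ha).symm

theorem Agrees.trans (h₁ : Agrees S t u) (h₂ : Agrees S u w) : Agrees S t w :=
  fun a ha => (h₁ a ha).trans (h₂ a ha)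

theorem agrees_univ_iff : Agrees Set.univ t u ↔ t = u :=
  ⟨fun h => funext fun a => h a (Set.mem_univ a), fun h => h ▸ Agrees.refl _ _⟩

theorem agrees_pair_iff {a b : α} : Agrees {a, b} t u ↔ t a = u a ∧ t b = u b := by
  simp only [Agrees, Set.forall_mem_insert, Set.mem_singleton_iff, forall_eq]

theorem not_agrees_of_ne {a : α} (ha : a ∈ S) (h : t a ≠ u a) : ¬ Agrees S t u :=
  fun hag => h (hag a ha)

end Agrees

def projectionDB {ι α V : Type} (sch : ι → Set α) (T : Set (α → V)) : ι → Set (α → V) :=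
  fun i => {u | ∃ s ∈ T, Agrees (sch i) u s}

namespace projectionDB

variable {ι α V : Type} {sch : ι → Set α} {T : Set (α → V)}

theorem mem_joinOut {s : α → V} (hs : s ∈ T) : s ∈ JoinOut sch (projectionDB sch T) :=
  fun _ => ⟨s, ⟨s, hs, Agrees.refl _ _⟩, Agrees.refl _ _⟩

theorem fullyReduced : FullyReduced sch (projectionDB sch T) := by
  rintro i u ⟨s, hs, hus⟩
  exact ⟨s, mem_joinOut hs, hus.symm⟩

theorem mem_subJoinOut_iff {K : Set ι} {t : α → V} :
    t ∈ SubJoinOut sch (projectionDB sch T) K ↔ ∀ i ∈ K, ∃ s ∈ T, Agrees (sch i) t s := by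
  refine forall₂_congr fun i _ => ⟨?_, fun ⟨s, hs, hts⟩ => ⟨s, ⟨s, hs, Agrees.refl _ _⟩, hts⟩⟩
  rintro ⟨u, ⟨s, hs, hus⟩, htu⟩
  exact ⟨s, hs, htu.trans hus⟩

theorem mem_subJoinOut_iff_of_schema_eq_univ {K : Set ι} {i : ι} (hi : i ∈ K)
    (hsch : sch i = Set.univ) {t : α → V} :
    t ∈ SubJoinOut sch (projectionDB sch T) K ↔ t ∈ T := by
  rw [mem_subJoinOut_iff]
  refine ⟨fun h => ?_, fun ht j _ => ⟨t, ht, Agrees.refl _ _⟩⟩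
  obtain ⟨s, hs, hts⟩ := h i hi
  rw [hsch, agrees_univ_iff] at hts
  exact hts ▸ hs

end projectionDB

/-- For the acyclic join ABCDE ⋈ ABCE ⋈ ADE ⋈ AB ⋈ AE (attributes A..E encoded as
0..4 : Fin 5), with the database obtained by projecting the tuples
t1 = (A=0,B=1,C=0,D=0,E=1) and t2 = all-0 onto each schema: the database is fully
reduced; the subjoin AB ⋈ AE (indices {3,4}) outputs exactly the tuples with A = 0
(four tuples over {A,B,E}); the complement join ABCDE ⋈ ABCE ⋈ ADE outputs exactly
t1 and t2; and the mixed tuples (A=0,B=1,E=0) and (A=0,B=0,E=1) of the subjoin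
output are dangling: they agree on {A,B,E} with no complement-join tuple. Hence the
subjoin AB ⋈ AE is not safe. -/
theorem stmt17
    (sch : Fin 5 → Set (Fin 5))
    (hsch : sch = ![Set.univ, {0, 1, 2, 4}, {0, 3, 4}, {0, 1}, {0, 4}])
    (t1 t2 : Fin 5 → Bool)
    (ht1 : t1 = ![false, true, false, false, true])
    (ht2 : t2 = fun _ => false)
    (R : Fin 5 → Set (Fin 5 → Bool))
    (hR : ∀ i, R i = {u | Agrees (sch i) u t1 ∨ Agrees (sch i) u t2}) :
    FullyReduced sch R ∧
    (∀ t, t ∈ SubJoinOut sch R {3, 4} ↔ t 0 = false) ∧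
    (∀ t, t ∈ SubJoinOut sch R ({3, 4} : Set (Fin 5))ᶜ ↔
      ((∀ a, t a = t1 a) ∨ (∀ a, t a = t2 a))) ∧
    (![false, true, false, false, false] ∈ SubJoinOut sch R {3, 4} ∧
      ∀ t' ∈ SubJoinOut sch R ({3, 4} : Set (Fin 5))ᶜ,
        ¬ Agrees ({0, 1, 4} : Set (Fin 5)) ![false, true, false, false, false] t') ∧
    (![false, false, false, false, true] ∈ SubJoinOut sch R {3, 4} ∧
      ∀ t' ∈ SubJoinOut sch R ({3, 4} : Set (Fin 5))ᶜ,
        ¬ Agrees ({0, 1, 4} : Set (Fin 5)) ![false, false, false, false, true] t') := by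
  obtain rfl : R = projectionDB sch {t1, t2} := funext fun i => by
    simp only [hR, projectionDB, Set.mem_insert_iff, Set.mem_singleton_iff, exists_eq_or_imp,
      exists_eq_left]
  have hAB_AE : ∀ t, t ∈ SubJoinOut sch (projectionDB sch {t1, t2}) {3, 4} ↔ t 0 = false := by
    intro t
    subst hsch ht1 ht2
    simp only [projectionDB.mem_subJoinOut_iff, Set.mem_insert_iff, Set.mem_singleton_iff,
      forall_eq_or_imp, forall_eq, exists_eq_or_imp, exists_eq_left, Matrix.cons_val,
      Matrix.cons_val_zero, Matrix.cons_val_one, agrees_pair_iff]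
    generalize t 0 = a, t 1 = b, t 4 = e
    revert a b e
    decide
  have hcomplement : ∀ t, t ∈ SubJoinOut sch (projectionDB sch {t1, t2}) ({3, 4} : Set (Fin 5))ᶜ ↔
      t = t1 ∨ t = t2 := fun t =>
    projectionDB.mem_subJoinOut_iff_of_schema_eq_univ (i := 0) (by decide) (by rw [hsch]; rfl)
  refine ⟨projectionDB.fullyReduced, hAB_AE, fun t => ?_, ⟨(hAB_AE _).2 rfl, ?_⟩,
    ⟨(hAB_AE _).2 rfl, ?_⟩⟩
  · simp only [hcomplement, funext_iff]
  all_goals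
    intro t' ht'
    rcases (hcomplement t').1 ht' with rfl | rfl <;> subst ht1 ht2
  · exact not_agrees_of_ne (a := 4) (by simp) (by decide)
  · exact not_agrees_of_ne (a := 1) (by simp) (by decide)
  · exact not_agrees_of_ne (a := 1) (by simp) (by decide)
  · exact not_agrees_of_ne (a := 4) (by simp) (by decide)
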